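/- arXiv:2009.14397 — 2 statements merged into one kernel-verified Lean document; each statement's English description precedes it below -/
import Mathlib

section
/- For every integer ℓ ≥ 2 there exist real numbers b_ℓ ∈ [0,1) and c_ℓ ∈ (0, 2√2/(3π)] such that the (ℓ−1)-fold composition κ^ℓ := κ₁ ∘ ⋯ ∘ κ₁ satisfies κ^ℓ(−1+t) = b_ℓ + c_ℓ t^{3/2} + o(t^{3/2}) as t → 0⁺; moreover c_ℓ < 2√2/(3π) whenever ℓ ≥ 3. -/
open Filter Asymptotics Real Set Topology

/-- The degree-0 arc-cosine function `κ₀(u) = 1 - arccos(u)/π`. -/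
noncomputable def kappa0 (u : ℝ) : ℝ := 1 - Real.arccos u / Real.pi

/-- The degree-1 arc-cosine function `κ₁(u) = (√(1-u²) + u(π - arccos u))/π`. -/
noncomputable def kappa1 (u : ℝ) : ℝ :=
  (Real.sqrt (1 - u ^ 2) + u * (Real.pi - Real.arccos u)) / Real.pi

/-!
Put `φ = arccos (1 - t)`, so that `-1 + t = -cos φ`. Then `κ₁(-1 + t) = (sin φ - φ cos φ) / π` and
`t ^ (3/2) = 2√2 sin³(φ/2)`; since `sin φ - φ cos φ ~ φ³/3 ~ (8/3) sin³(φ/2)` as `φ → 0`, this gives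
`κ₁(-1 + t) ~ 2√2/(3π) t ^ (3/2)`, the case `ℓ = 2`. Each further layer composes with `κ₁`, which
on `(-1, 1)` has derivative `κ₀ ∈ (0, 1)` and which maps `[0, 1)` into itself: the expansion
`b + c t ^ (3/2)` becomes `κ₁(b) + κ₀(b) c t ^ (3/2)`, with a strictly smaller coefficient.
-/

theorem HasDerivAt.isLittleO_comp_of_isLittleO {α : Type*} {l : Filter α} {F : ℝ → ℝ}
    {F' b c : ℝ} {f g : α → ℝ} (hF : HasDerivAt F F' b) (hg : Tendsto g l (𝓝 0))
    (hf : (fun x => f x - (b + c * g x)) =o[l] g) :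
    (fun x => F (f x) - (F b + F' * c * g x)) =o[l] g := by
  have hfb : (fun x => f x - b) =O[l] g :=
    (hf.isBigO.add ((isBigO_refl g l).const_mul_left c)).congr_left fun x => by ring
  have hf_tendsto : Tendsto f l (𝓝 b) :=
    tendsto_sub_nhds_zero_iff.mp (hfb.trans_tendsto hg)
  have hlin := (hF.isLittleO.comp_tendsto hf_tendsto).trans_isBigO hfb
  refine (hlin.add (hf.const_mul_left F')).congr_left fun x => ?_
  simp only [Function.comp_apply, smul_eq_mul]
  ring

theorem isEquivalent_sin_sub_mul_cos :
    (fun x : ℝ => sin x - x * cos x) ~[𝓝 0] fun x => x ^ 3 / 3 := by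
  have hO : (fun x : ℝ => sin x - x * cos x - x ^ 3 / 3) =O[𝓝 0] fun x => x ^ 5 := by
    refine IsBigO.of_bound 1 ?_
    filter_upwards [Icc_mem_nhds (show (-1 : ℝ) < 0 by norm_num) one_pos] with x hx
    have hx₁ : |x| ≤ 1 := abs_le.2 hx
    have hsplit : sin x - x * cos x - x ^ 3 / 3
        = (sin x - (x - x ^ 3 / 6)) - x * (cos x - (1 - x ^ 2 / 2)) := by ring
    rw [Real.norm_eq_abs, Real.norm_eq_abs, hsplit, one_mul, abs_pow]
    calc _ ≤ |sin x - (x - x ^ 3 / 6)| + |x| * |cos x - (1 - x ^ 2 / 2)| := by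
          rw [← abs_mul]; exact abs_sub _ _
      _ ≤ |x| ^ 5 / 100 + |x| * (|x| ^ 4 * (5 / 96)) := by
          gcongr
          exacts [sin_bound hx₁, cos_bound hx₁]
      _ ≤ |x| ^ 5 := by nlinarith [pow_nonneg (abs_nonneg x) 5]
  refine hO.trans_isLittleO ?_
  simpa only [div_eq_inv_mul] using
    (isLittleO_const_mul_right_iff (by norm_num : (3 : ℝ)⁻¹ ≠ 0)).2
      (isLittleO_pow_pow (by norm_num : 3 < 5))

theorem isEquivalent_sin_sub_mul_cos_sin_half_pow :
    (fun x : ℝ => sin x - x * cos x) ~[𝓝 0] fun x => 8 / 3 * sin (x / 2) ^ 3 := by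
  have hhalf : Tendsto (fun x : ℝ => x / 2) (𝓝 0) (𝓝 0) :=
    (continuous_id.div_const 2).tendsto' 0 0 (zero_div 2)
  have hsin := ((isEquivalent_sin.comp_tendsto hhalf).pow 3).symm
  refine isEquivalent_sin_sub_mul_cos.trans ?_
  refine ((IsEquivalent.refl (u := fun _ : ℝ => (8 : ℝ) / 3)).mul hsin).congr_left ?_
  exact Eventually.of_forall fun x => by
    simp only [Pi.mul_apply, Pi.pow_apply, Function.comp_apply, id]; ring

theorem one_sub_cos_rpow_three_halves {φ : ℝ} (h₀ : 0 ≤ φ) (h₁ : φ ≤ 2 * π) :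
    (1 - cos φ) ^ ((3 : ℝ) / 2) = 2 * √2 * sin (φ / 2) ^ 3 := by
  have hsin : 0 ≤ sin (φ / 2) := sin_nonneg_of_nonneg_of_le_pi (by linarith) (by linarith)
  have hhalf : 1 - cos φ = 2 * sin (φ / 2) ^ 2 := by
    have := cos_sq (φ / 2)
    rw [mul_div_cancel₀ φ two_ne_zero] at this
    linarith [sin_sq_add_cos_sq (φ / 2)]
  rw [rpow_div_two_eq_sqrt 3 (by rw [hhalf]; positivity), hhalf, sqrt_mul zero_le_two,
    sqrt_sq hsin, show (3 : ℝ) = (3 : ℕ) by norm_num, rpow_natCast]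
  linear_combination sin (φ / 2) ^ 3 * √2 * sq_sqrt (zero_le_two : (0 : ℝ) ≤ 2)

theorem hasDerivAt_kappa1 {u : ℝ} (h₀ : -1 < u) (h₁ : u < 1) :
    HasDerivAt kappa1 (kappa0 u) u := by
  have hpos : 0 < 1 - u ^ 2 := by nlinarith
  have hsqrt : HasDerivAt (fun u : ℝ => √(1 - u ^ 2)) (-(2 * u) / (2 * √(1 - u ^ 2))) u := by
    simpa using ((hasDerivAt_pow 2 u).const_sub 1).sqrt hpos.ne'
  have hmul : HasDerivAt (fun u : ℝ => u * (π - arccos u))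
      (1 * (π - arccos u) + u * -(-(1 / √(1 - u ^ 2)))) u :=
    (hasDerivAt_id' u).mul ((hasDerivAt_arccos h₀.ne' h₁.ne).const_sub π)
  refine ((hsqrt.add hmul).div_const π).congr_deriv ?_
  have : √(1 - u ^ 2) ≠ 0 := (sqrt_pos.2 hpos).ne'
  rw [kappa0]
  field_simp
  ring

theorem kappa0_pos {u : ℝ} (h : -1 < u) : 0 < kappa0 u := by
  rw [kappa0, sub_pos, div_lt_one pi_pos]
  exact arccos_lt_pi.2 h

theorem kappa0_lt_one {u : ℝ} (h : u < 1) : kappa0 u < 1 := by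
  rw [kappa0, sub_lt_self_iff]
  exact div_pos (arccos_pos.2 h) pi_pos

theorem strictMonoOn_kappa1 : StrictMonoOn kappa1 (Icc (-1) 1) := by
  refine strictMonoOn_of_deriv_pos (convex_Icc _ _) (by unfold kappa1; fun_prop) fun u hu => ?_
  rw [interior_Icc] at hu
  rw [(hasDerivAt_kappa1 hu.1 hu.2).deriv]
  exact kappa0_pos hu.1

theorem kappa1_nonneg {u : ℝ} (h₀ : -1 ≤ u) (h₁ : u ≤ 1) : 0 ≤ kappa1 u := by
  have h : kappa1 (-1) = 0 := by simp [kappa1]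
  exact h ▸ strictMonoOn_kappa1.monotoneOn ⟨le_rfl, by norm_num⟩ ⟨h₀, h₁⟩ h₀

theorem kappa1_lt_one {u : ℝ} (h₀ : -1 ≤ u) (h₁ : u < 1) : kappa1 u < 1 := by
  have h : kappa1 1 = 1 := by simp [kappa1, pi_ne_zero]
  exact h ▸ strictMonoOn_kappa1 ⟨h₀, h₁.le⟩ ⟨by norm_num, le_rfl⟩ h₁

theorem kappa1_neg_cos {φ : ℝ} (h₀ : 0 ≤ φ) (h₁ : φ ≤ π) :
    kappa1 (-cos φ) = (sin φ - φ * cos φ) / π := by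
  have hsqrt : √(1 - (-cos φ) ^ 2) = sin φ := by
    rw [neg_sq, ← sin_sq, sqrt_sq (sin_nonneg_of_nonneg_of_le_pi h₀ h₁)]
  rw [kappa1, hsqrt, arccos_neg, arccos_cos h₀ h₁]
  ring

theorem isEquivalent_kappa1_neg_one_add :
    (fun t : ℝ => kappa1 (-1 + t)) ~[𝓝[>] 0]
      fun t => 2 * √2 / (3 * π) * t ^ ((3 : ℝ) / 2) := by
  have hφ : Tendsto (fun t : ℝ => arccos (1 - t)) (𝓝[>] 0) (𝓝 0) := by
    have : Continuous fun t : ℝ => arccos (1 - t) := by fun_prop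
    simpa using (this.tendsto 0).mono_left nhdsWithin_le_nhds
  have h := (isEquivalent_sin_sub_mul_cos_sin_half_pow.div
    (IsEquivalent.refl (u := fun _ : ℝ => π))).comp_tendsto hφ
  have hcos : ∀ᶠ t in 𝓝[>] (0 : ℝ), cos (arccos (1 - t)) = 1 - t := by
    filter_upwards [Ioo_mem_nhdsGT_of_mem ⟨le_rfl, two_pos⟩] with t ⟨ht₀, ht₂⟩
    exact cos_arccos (by linarith) (by linarith)
  refine (h.congr_left ?_).congr_right ?_ <;> filter_upwards [hcos] with t hcos <;>
    simp only [Function.comp_apply, Pi.div_apply]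
  · rw [← kappa1_neg_cos (arccos_nonneg _) (arccos_le_pi _), hcos, neg_sub, sub_eq_neg_add]
  · have hφ_le : arccos (1 - t) ≤ 2 * π := by linarith [arccos_le_pi (1 - t), pi_pos]
    have hpow := one_sub_cos_rpow_three_halves (arccos_nonneg _) hφ_le
    rw [hcos, sub_sub_cancel] at hpow
    rw [hpow]
    field_simp
    linear_combination
      (-4 : ℝ) * sin (arccos (1 - t) / 2) ^ 3 * sq_sqrt (zero_le_two : (0 : ℝ) ≤ 2)

theorem kappa1_iterate_succ_expansion (n : ℕ) :
    ∃ b c : ℝ, 0 ≤ b ∧ b < 1 ∧ 0 < c ∧ c ≤ 2 * √2 / (3 * π) ∧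
      (1 ≤ n → c < 2 * √2 / (3 * π)) ∧
      (fun t : ℝ => kappa1^[n + 1] (-1 + t) - (b + c * t ^ ((3 : ℝ) / 2)))
        =o[𝓝[>] 0] fun t => t ^ ((3 : ℝ) / 2) := by
  have hpow : Tendsto (fun t : ℝ => t ^ ((3 : ℝ) / 2)) (𝓝[>] 0) (𝓝 0) := by
    have := (continuousAt_rpow_const 0 ((3 : ℝ) / 2) (by norm_num)).tendsto
    rw [zero_rpow (by norm_num)] at this
    exact this.mono_left nhdsWithin_le_nhds
  induction n with
  | zero =>
    refine ⟨0, 2 * √2 / (3 * π), le_rfl, one_pos, by positivity, le_rfl, by omega, ?_⟩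
    refine (isEquivalent_kappa1_neg_one_add.isLittleO.trans_isBigO
      ((isBigO_refl _ _).const_mul_left _)).congr_left fun t => ?_
    simp
  | succ n ih =>
    obtain ⟨b, c, hb₀, hb₁, hc, hc_le, -, hf⟩ := ih
    have hc_lt : kappa0 b * c < c := mul_lt_of_lt_one_left hc (kappa0_lt_one hb₁)
    refine ⟨kappa1 b, kappa0 b * c, kappa1_nonneg (by linarith) hb₁.le,
      kappa1_lt_one (by linarith) hb₁, mul_pos (kappa0_pos (by linarith)) hc,
      by linarith, fun _ => by linarith, ?_⟩
    simp only [Function.iterate_succ_apply' kappa1 (n + 1)]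
    exact (hasDerivAt_kappa1 (by linarith) hb₁).isLittleO_comp_of_isLittleO hpow hf

/-- Expansion around `-1` of the deep ReLU random-feature kernel function
`κ^ℓ = κ₁ ∘ ⋯ ∘ κ₁` (`ℓ-1` factors). -/
theorem deep_rf_expansion_minus_one (ℓ : ℕ) (hℓ : 2 ≤ ℓ) :
    ∃ b c : ℝ, 0 ≤ b ∧ b < 1 ∧ 0 < c ∧ c ≤ 2 * Real.sqrt 2 / (3 * Real.pi) ∧
      (3 ≤ ℓ → c < 2 * Real.sqrt 2 / (3 * Real.pi)) ∧
      (fun t : ℝ => kappa1^[ℓ - 1] (-1 + t) - (b + c * t ^ ((3 : ℝ) / 2)))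
        =o[𝓝[>] (0 : ℝ)] fun t => t ^ ((3 : ℝ) / 2) := by
  obtain ⟨b, c, hb₀, hb₁, hc, hc_le, hc_lt, hexp⟩ := kappa1_iterate_succ_expansion (ℓ - 2)
  rw [show ℓ - 1 = ℓ - 2 + 1 by omega]
  exact ⟨b, c, hb₀, hb₁, hc, hc_le, fun hℓ₃ => hc_lt (by omega), hexp⟩
end

section
/- For every integer ℓ ≥ 2, the ℓ-layer neural tangent kernel function κ_NTK^ℓ satisfies, as t → 0⁺, κ_NTK^ℓ(1−t) = ℓ − (ℓ(ℓ−1)/2) · (√2/π) · t^{1/2} + o(t^{1/2}). -/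
/-! With `θ = arccos u` one has `κ₀(u) = 1 - θ/π` and `κ₁(u) - u = (sin θ - θ cos θ)/π`, which lies
in `[0, θ(1 - u)/π]`. Near `u = 1 - s`, `2 sin(θ/2) = √(2s)`, so `θ ~ √(2s)`; in particular
`1 - κ₁(1 - s) = s + o(s)`. Iterating, `κ₁^{∘m}(1 - t) = 1 - t(1 + o(1))`, hence
`κ₀(κ₁^{∘m}(1 - t)) = 1 - (√2/π)√t + o(√t)` and `κ₁^{∘m}(1 - t) = 1 + o(√t)`. First-order expansions
in `√t → 0` multiply like affine functions, and each step of the recursion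
`κ_NTK^{ℓ+1} = κ_NTK^ℓ · κ₀(κ^ℓ) + κ^{ℓ+1}` adds `ℓ` to the coefficient of `-(√2/π)√t`. -/

open Filter Asymptotics Real Set Topology

/-- The `ℓ`-layer neural tangent kernel function of a fully-connected ReLU network
(defined for `ℓ ≥ 2`; values below 2 are set to the 2-layer NTK):
`κ_NTK^2(u) = u κ₀(u) + κ₁(u)` and
`κ_NTK^ℓ(u) = κ_NTK^{ℓ-1}(u) · κ₀(κ₁^{∘(ℓ-2)}(u)) + κ₁^{∘(ℓ-1)}(u)` for `ℓ ≥ 3`. -/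
noncomputable def kappaNTK : ℕ → ℝ → ℝ
  | 0, u => u * kappa0 u + kappa1 u
  | 1, u => u * kappa0 u + kappa1 u
  | 2, u => u * kappa0 u + kappa1 u
  | n + 3, u => kappaNTK (n + 2) u * kappa0 (kappa1^[n + 1] u) + kappa1^[n + 2] u

namespace Asymptotics

section

variable {α 𝕜 : Type*} [NormedField 𝕜] {l : Filter α} {r : α → 𝕜}

theorem isLittleO_mul_self_of_tendsto (hr : Tendsto r l (𝓝 0)) : (fun x => r x * r x) =o[l] r :=
  (((isLittleO_one_iff 𝕜).2 hr).mul_isBigO (isBigO_refl r l)).congr_right fun x => one_mul (r x)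

theorem isLittleO_mul_sub_affine (hr : Tendsto r l (𝓝 0)) {f g : α → 𝕜} {a b c d : 𝕜}
    (hf : (fun x => f x - (a + b * r x)) =o[l] r) (hg : (fun x => g x - (c + d * r x)) =o[l] r) :
    (fun x => f x * g x - (a * c + (a * d + b * c) * r x)) =o[l] r := by
  have hr₁ : r =O[l] fun _ => (1 : 𝕜) := hr.isBigO_one 𝕜
  have hA : (fun x => a + b * r x) =O[l] fun _ => (1 : 𝕜) :=
    (isBigO_const_one 𝕜 a l).add (hr₁.const_mul_left b)
  have hC : (fun x => c + d * r x) =O[l] fun _ => (1 : 𝕜) :=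
    (isBigO_const_one 𝕜 c l).add (hr₁.const_mul_left d)
  have hg₁ : g =O[l] fun _ => (1 : 𝕜) :=
    ((hg.isBigO.trans hr₁).add hC).congr_left fun x => sub_add_cancel (g x) _
  have key := (((hf.mul_isBigO hg₁).congr_right fun x => mul_one (r x)).add
    ((hA.mul_isLittleO hg).congr_right fun x => one_mul (r x))).add
    ((isLittleO_mul_self_of_tendsto hr).const_mul_left (b * d))
  exact key.congr_left fun x => by ring

end

theorem IsEquivalent.sqrt {α : Type*} {l : Filter α} {u v : α → ℝ} (h : u ~[l] v) :
    (fun x => √(u x)) ~[l] fun x => √(v x) := by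
  obtain ⟨φ, hφ, huv⟩ := h.exists_eq_mul
  refine isEquivalent_iff_exists_eq_mul.2 ⟨fun x => √(φ x), by simpa using hφ.sqrt, ?_⟩
  filter_upwards [huv, hφ.eventually_const_lt zero_lt_one] with x hx hφx
  simp [hx, Real.sqrt_mul hφx.le]

theorem IsEquivalent.iterate {E : Type*} [NormedAddCommGroup E] {σ : E → E} (h : σ ~[𝓝 0] id)
    (n : ℕ) : σ^[n] ~[𝓝 0] id := by
  induction n with
  | zero => exact IsEquivalent.refl
  | succ n ih =>
    rw [Function.iterate_succ']
    exact (h.comp_tendsto (ih.symm.tendsto_nhds tendsto_id)).trans ih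

end Asymptotics

theorem Real.mul_cos_le_sin {θ : ℝ} (h₀ : 0 ≤ θ) (hπ : θ ≤ π) : θ * cos θ ≤ sin θ := by
  rcases le_or_gt (cos θ) 0 with hcos | hcos
  · nlinarith [sin_nonneg_of_nonneg_of_le_pi h₀ hπ]
  · have hθ : θ < π / 2 := by
      by_contra! h
      exact hcos.not_ge (cos_nonpos_of_pi_div_two_le_of_le h (by linarith [pi_pos]))
    have h := le_tan h₀ hθ
    rwa [tan_eq_sin_div_cos, le_div_iff₀ hcos] at h

theorem kappa1_sub_self {u : ℝ} (h₁ : -1 ≤ u) (h₂ : u ≤ 1) :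
    kappa1 u - u = (sin (arccos u) - arccos u * cos (arccos u)) / π := by
  rw [kappa1, sin_arccos, cos_arccos h₁ h₂]
  field_simp
  ring

theorem kappa1_of_one_le {u : ℝ} (hu : 1 ≤ u) : kappa1 u = u := by
  rw [kappa1, Real.sqrt_eq_zero'.2 (by nlinarith), arccos_eq_zero.2 hu]
  field_simp
  ring

theorem abs_kappa1_sub_self_le {u : ℝ} (hu : -1 ≤ u) :
    |kappa1 u - u| ≤ arccos u * (1 - u) / π := by
  rcases le_or_gt u 1 with hu₁ | hu₁
  · have hθ₀ := arccos_nonneg u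
    have hθπ := arccos_le_pi u
    rw [kappa1_sub_self hu hu₁, abs_div, abs_of_pos pi_pos,
      abs_of_nonneg (sub_nonneg.2 (mul_cos_le_sin hθ₀ hθπ))]
    gcongr
    nlinarith [sin_le hθ₀, cos_arccos hu hu₁]
  · simp [kappa1_of_one_le hu₁.le, arccos_eq_zero.2 hu₁.le]

theorem tendsto_arccos_one_sub : Tendsto (fun s => arccos (1 - s)) (𝓝 0) (𝓝 0) := by
  have h : Tendsto (fun s => arccos (1 - s)) (𝓝 0) (𝓝 (arccos (1 - 0))) :=
    (continuous_arccos.comp (continuous_sub_left 1)).tendsto 0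
  simpa using h

/-- `κ₁` read in the coordinate `s = 1 - u`, centred at its fixed point `u = 1`. -/
noncomputable def kappa1Conj (s : ℝ) : ℝ := 1 - kappa1 (1 - s)

theorem kappa1_iterate_one_sub (m : ℕ) (t : ℝ) : kappa1^[m] (1 - t) = 1 - kappa1Conj^[m] t := by
  have h : Function.Semiconj (fun s => 1 - s) kappa1Conj kappa1 := fun s => sub_sub_cancel _ _
  rw [← h.iterate_right m t]

theorem isEquivalent_kappa1Conj : kappa1Conj ~[𝓝 0] id := by
  have hsmall : (fun s => arccos (1 - s) / π * s) =o[𝓝 0] id :=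
    (((isLittleO_one_iff ℝ).2 (by simpa using tendsto_arccos_one_sub.div_const π)).mul_isBigO
      (isBigO_refl id _)).congr_right fun s => one_mul s
  refine IsBigO.trans_isLittleO (IsBigO.of_bound 1 ?_) hsmall
  filter_upwards [eventually_le_nhds (show (0 : ℝ) < 2 by norm_num)] with s hs
  have h := abs_kappa1_sub_self_le (u := 1 - s) (by linarith)
  rw [Real.norm_eq_abs, Real.norm_eq_abs, one_mul, Pi.sub_apply, kappa1Conj, id,
    show 1 - kappa1 (1 - s) - s = -(kappa1 (1 - s) - (1 - s)) by ring, abs_neg]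
  refine h.trans (le_of_eq_of_le ?_ (le_abs_self _))
  ring

theorem sqrt_two_mul_sqrt_eq_two_mul_sin {s : ℝ} (hs : s ≤ 2) :
    √2 * √s = 2 * sin (arccos (1 - s) / 2) := by
  rcases le_or_gt s 0 with hs₀ | hs₀
  · simp [Real.sqrt_eq_zero'.2 hs₀, arccos_eq_zero.2 (by linarith : 1 ≤ 1 - s)]
  · rw [sin_half_eq_sqrt (arccos_nonneg _) ((arccos_le_pi _).trans (by linarith [pi_pos])),
      cos_arccos (by linarith) (by linarith), sub_sub_cancel, Real.sqrt_div' _ zero_le_two]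
    field_simp
    rw [Real.sq_sqrt zero_le_two]

theorem isEquivalent_arccos_one_sub : (fun s => arccos (1 - s)) ~[𝓝 0] fun s => √2 * √s := by
  have hsin := isEquivalent_sin.comp_tendsto (by simpa using tendsto_arccos_one_sub.div_const 2)
  refine ((IsEquivalent.refl (u := fun _ => (2 : ℝ))).mul hsin).symm.congr_left ?_
    |>.congr_right ?_
  · exact Eventually.of_forall fun s => by simp; ring
  · filter_upwards [eventually_le_nhds (show (0 : ℝ) < 2 by norm_num)] with s hs
    simp [sqrt_two_mul_sqrt_eq_two_mul_sin hs]

theorem isLittleO_kappa0_kappa1_iterate_one_sub (m : ℕ) :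
    (fun t => kappa0 (kappa1^[m] (1 - t)) - (1 - √2 / π * √t)) =o[𝓝 0] fun t => √t := by
  have hσ := isEquivalent_kappa1Conj.iterate m
  have h : (fun t => arccos (1 - kappa1Conj^[m] t)) ~[𝓝 0] fun t => √2 * √t :=
    (isEquivalent_arccos_one_sub.comp_tendsto (hσ.symm.tendsto_nhds tendsto_id)).trans
      (IsEquivalent.refl.mul hσ.sqrt)
  have h' := (h.isLittleO.trans_isBigO ((isBigO_refl _ _).const_mul_left √2)).const_mul_left
    (-π⁻¹)
  refine h'.congr_left fun t => ?_
  simp only [kappa0, kappa1_iterate_one_sub, Pi.sub_apply]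
  field_simp
  ring

theorem tendsto_sqrt_nhdsGT_zero : Tendsto (fun t => √t) (𝓝[>] 0) (𝓝 0) :=
  (Real.continuous_sqrt.tendsto' 0 0 Real.sqrt_zero).mono_left nhdsWithin_le_nhds

theorem isLittleO_id_sqrt : (fun t => t) =o[𝓝[>] 0] fun t => √t :=
  (isLittleO_mul_self_of_tendsto tendsto_sqrt_nhdsGT_zero).congr'
    (eventually_mem_nhdsWithin.mono fun _ ht => Real.mul_self_sqrt (le_of_lt ht)) EventuallyEq.rfl

theorem isLittleO_kappa1_iterate_one_sub (m : ℕ) :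
    (fun t => kappa1^[m] (1 - t) - 1) =o[𝓝[>] 0] fun t => √t := by
  have h := ((isEquivalent_kappa1Conj.iterate m).isBigO.mono nhdsWithin_le_nhds).trans_isLittleO
    isLittleO_id_sqrt
  refine h.neg_left.congr_left fun t => ?_
  simp [kappa1_iterate_one_sub]

noncomputable def ntkExpansion (n t : ℝ) : ℝ := n - n * (n - 1) / 2 * (√2 / π) * √t

theorem isLittleO_ntkExpansion_succ {f : ℝ → ℝ} {n : ℝ} (m : ℕ)
    (hf : (fun t => f t - ntkExpansion n t) =o[𝓝[>] 0] fun t => √t) :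
    (fun t => f t * kappa0 (kappa1^[m] (1 - t)) + kappa1^[m + 1] (1 - t) - ntkExpansion (n + 1) t)
      =o[𝓝[>] 0] fun t => √t := by
  have hprod := isLittleO_mul_sub_affine tendsto_sqrt_nhdsGT_zero (a := n)
    (b := -(n * (n - 1) / 2 * (√2 / π))) (c := 1) (d := -(√2 / π))
    (hf.congr_left fun t => by simp only [ntkExpansion]; ring)
    (((isLittleO_kappa0_kappa1_iterate_one_sub m).mono nhdsWithin_le_nhds).congr_left
      fun t => by ring)
  refine (hprod.add (isLittleO_kappa1_iterate_one_sub (m + 1))).congr_left fun t => ?_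
  simp only [ntkExpansion]
  ring

theorem kappaNTK_add_three (n : ℕ) (u : ℝ) :
    kappaNTK (n + 3) u = kappaNTK (n + 2) u * kappa0 (kappa1^[n + 1] u) + kappa1^[n + 2] u := rfl

theorem isLittleO_kappaNTK_one_sub (ℓ : ℕ) (hℓ : 2 ≤ ℓ) :
    (fun t => kappaNTK ℓ (1 - t) - ntkExpansion ℓ t) =o[𝓝[>] 0] fun t => √t := by
  induction ℓ, hℓ using Nat.le_induction with
  | base =>
    -- `κ_NTK^2` is one step of the recursion started from `κ_NTK^1(u) = u`.
    have h := isLittleO_ntkExpansion_succ (f := fun t => 1 - t) (n := 1) 0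
      ((isLittleO_kappa1_iterate_one_sub 0).congr_left fun t => by simp [ntkExpansion])
    norm_num at h
    exact h
  | succ n hn ih =>
    obtain ⟨k, rfl⟩ := Nat.exists_eq_add_of_le' hn
    simpa [kappaNTK_add_three] using isLittleO_ntkExpansion_succ (k + 1) ih

/-- Expansion around `+1` of the `ℓ`-layer NTK function. -/
theorem deep_ntk_expansion_plus_one (ℓ : ℕ) (hℓ : 2 ≤ ℓ) :
    (fun t : ℝ => kappaNTK ℓ (1 - t) -
        ((ℓ : ℝ) - (ℓ : ℝ) * ((ℓ : ℝ) - 1) / 2 * (Real.sqrt 2 / Real.pi) * t ^ ((1 : ℝ) / 2)))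
      =o[𝓝[>] (0 : ℝ)] fun t => t ^ ((1 : ℝ) / 2) := by
  simp only [← Real.sqrt_eq_rpow]
  exact isLittleO_kappaNTK_one_sub ℓ hℓ
end
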